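/- arXiv:1607.05432 — 2 statements merged into one kernel-verified Lean document; each statement's English description precedes it below -/
import Mathlib

section
/- Let D ⊂ R^d be compact and Y a centered Gaussian process on D with continuous covariance function k. Let (x_{ni})_{1≤i≤n, n∈N} be a triangular array of points of D such that for each x ∈ D, min_{i≤n} ||x_{ni} - x|| → 0 as n → ∞. For each n, let M_1,...,M_{p_n} be Kriging (conditional-expectation) predictors based on subvectors X_1,...,X_{p_n} of X = (x_{n1},...,x_{nn}) whose union covers all components of X, and let M_{A_n}(x) be their optimal linear aggregation. Then sup_{x ∈ D} E[(Y(x) - M_{A_n}(x))^2] → 0 as n → ∞. -/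
/-!
A Kriging sub-model is the L²-projection of `Y q` onto the span of its observations, so its
error is at most that of predicting `Y q` by any single observed value `Y (x n i)` of its
sub-design, and the optimal aggregate does at least as well as each sub-model. As the
sub-designs cover the design, the error at `q` is therefore bounded by
`E[(Y q - Y (x n i))²] = k q q - 2 k q (x n i) + k (x n i) (x n i)` for every design point.
On compact `D` this bound is uniformly continuous and vanishes on the diagonal, and
pointwise density of the design upgrades to uniform density via a finite net, which makes
the supremum of the error tend to zero.
-/

open MeasureTheory ProbabilityTheory Filter Topology

section ConditionalExpectation

variable {Ω : Type*} {m m₀ : MeasurableSpace Ω} {μ : Measure[m₀] Ω}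

lemma integral_sub_sq {f g : Ω → ℝ} (hf : MemLp f 2 μ) (hg : MemLp g 2 μ) :
    ∫ ω, (f ω - g ω) ^ 2 ∂μ =
      ∫ ω, f ω * f ω ∂μ - 2 * ∫ ω, f ω * g ω ∂μ + ∫ ω, g ω * g ω ∂μ := by
  have hff : Integrable (fun ω => f ω * f ω) μ := hf.integrable_mul hf
  have hfg : Integrable (fun ω => 2 * (f ω * g ω)) μ := (hf.integrable_mul hg).const_mul 2
  have hgg : Integrable (fun ω => g ω * g ω) μ := hg.integrable_mul hg
  calc ∫ ω, (f ω - g ω) ^ 2 ∂μ = ∫ ω, (f ω * f ω - 2 * (f ω * g ω) + g ω * g ω) ∂μ := by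
        congr 1 with ω; ring
    _ = _ := by
        rw [integral_add (f := fun ω => f ω * f ω - 2 * (f ω * g ω)) (hff.sub hfg) hgg,
          integral_sub hff hfg, integral_const_mul]

lemma integral_mul_sub_condExp_eq_zero (hm : m ≤ m₀) [IsFiniteMeasure μ] {f g : Ω → ℝ}
    (hf : MemLp f 2 μ) (hg : MemLp g 2 μ) (hgm : StronglyMeasurable[m] g) :
    ∫ ω, g ω * (f ω - μ[f|m] ω) ∂μ = 0 := by
  have hgf : Integrable (fun ω => g ω * f ω) μ := hg.integrable_mul hf
  have hgE : Integrable (fun ω => g ω * μ[f|m] ω) μ := hg.integrable_mul (hf.condExp one_le_two)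
  have pull_out : ∫ ω, g ω * f ω ∂μ = ∫ ω, g ω * μ[f|m] ω ∂μ :=
    calc ∫ ω, g ω * f ω ∂μ = ∫ ω, μ[g * f|m] ω ∂μ := (integral_condExp hm).symm
      _ = ∫ ω, g ω * μ[f|m] ω ∂μ :=
        integral_congr_ae (condExp_mul_of_stronglyMeasurable_left hgm hgf (hf.integrable one_le_two))
  simp_rw [mul_sub]
  rw [integral_sub hgf hgE, pull_out, sub_self]

lemma integral_sq_sub_condExp_le (hm : m ≤ m₀) [IsFiniteMeasure μ] {f g : Ω → ℝ}
    (hf : MemLp f 2 μ) (hg : MemLp g 2 μ) (hgm : StronglyMeasurable[m] g) :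
    ∫ ω, (f ω - μ[f|m] ω) ^ 2 ∂μ ≤ ∫ ω, (f ω - g ω) ^ 2 ∂μ := by
  set e := μ[f|m]
  have he : MemLp e 2 μ := hf.condExp one_le_two
  have horth : ∫ ω, (f ω - e ω) * (g ω - e ω) ∂μ = 0 := by
    simp_rw [mul_comm (f _ - e _)]
    exact integral_mul_sub_condExp_eq_zero hm hf (hg.sub he) (hgm.sub stronglyMeasurable_condExp)
  calc ∫ ω, (f ω - e ω) ^ 2 ∂μ ≤ ∫ ω, (f ω - e ω) ^ 2 ∂μ + ∫ ω, (g ω - e ω) ^ 2 ∂μ :=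
        le_add_of_nonneg_right (integral_nonneg fun ω => sq_nonneg _)
    _ = ∫ ω, ((f ω - e ω) - (g ω - e ω)) ^ 2 ∂μ := by
        have hexpand := integral_sub_sq (hf.sub he) (hg.sub he)
        simp only [Pi.sub_apply] at hexpand
        rw [hexpand, horth]
        simp only [sq]
        ring
    _ = ∫ ω, (f ω - g ω) ^ 2 ∂μ := by simp_rw [sub_sub_sub_cancel_right]

end ConditionalExpectation

lemma integral_sq_sub_condExp_comap_le {Ω ι : Type*} [MeasurableSpace Ω] {μ : Measure Ω}
    [IsFiniteMeasure μ] {Z : ι → Ω → ℝ} (hZ : ∀ i, Measurable (Z i)) {f : Ω → ℝ}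
    (hf : MemLp f 2 μ) (i : ι) (hZi : MemLp (Z i) 2 μ) :
    ∫ ω, (f ω - μ[f | MeasurableSpace.comap (fun ω j => Z j ω) inferInstance] ω) ^ 2 ∂μ ≤
      ∫ ω, (f ω - Z i ω) ^ 2 ∂μ :=
  integral_sq_sub_condExp_le (measurable_pi_lambda _ hZ).comap_le hf hZi
    ((measurable_pi_apply i).comp (comap_measurable fun ω j => Z j ω)).stronglyMeasurable

section Dense

variable {X : Type*} [PseudoMetricSpace X] [CompactSpace X] {ι : ℕ → Type*}
  [∀ n, Nonempty (ι n)]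

lemma eventually_forall_exists_dist_lt {x : ∀ n, ι n → X}
    (hx : ∀ q, Tendsto (fun n => ⨅ i, dist (x n i) q) atTop (𝓝 0)) {δ : ℝ} (hδ : 0 < δ) :
    ∀ᶠ n in atTop, ∀ q, ∃ i, dist (x n i) q < δ := by
  obtain ⟨t, -, ht, hcov⟩ := finite_cover_balls_of_compact (isCompact_univ (X := X)) (half_pos hδ)
  have hnet : ∀ᶠ n in atTop, ∀ q₀ ∈ t, ∃ i, dist (x n i) q₀ < δ / 2 :=
    (ht.eventually_all).2 fun q₀ _ =>
      ((hx q₀).eventually_lt_const (half_pos hδ)).mono fun n hn => exists_lt_of_ciInf_lt hn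
  filter_upwards [hnet] with n hn q
  obtain ⟨q₀, hq₀t, hq₀⟩ := Set.mem_iUnion₂.mp (hcov (Set.mem_univ q))
  obtain ⟨i, hi⟩ := hn q₀ hq₀t
  exact ⟨i, (dist_triangle_right _ _ q₀).trans_lt (by linarith [Metric.mem_ball.mp hq₀])⟩

lemma exists_pos_forall_dist_lt_imp_lt {F : X → X → ℝ}
    (hF : Continuous fun p : X × X => F p.1 p.2) (hdiag : ∀ q, F q q = 0) {ε : ℝ}
    (hε : 0 < ε) : ∃ δ > 0, ∀ q r, dist r q < δ → F q r < ε := by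
  obtain ⟨δ, hδ, hFδ⟩ :=
    Metric.uniformContinuous_iff.mp
      (CompactSpace.uniformContinuous_of_continuous (α := X × X) hF) ε hε
  refine ⟨δ, hδ, fun q r hqr => ?_⟩
  have hclose : dist (q, r) (q, q) < δ := by simpa [Prod.dist_eq] using hqr
  simpa [hdiag, Real.dist_eq] using (le_abs_self _).trans_lt (hFδ hclose)

lemma tendsto_iSup_of_le_of_tendsto_iInf_dist {x : ∀ n, ι n → X}
    (hx : ∀ q, Tendsto (fun n => ⨅ i, dist (x n i) q) atTop (𝓝 0)) {F : X → X → ℝ}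
    (hF : Continuous fun p : X × X => F p.1 p.2) (hdiag : ∀ q, F q q = 0) {f : ℕ → X → ℝ}
    (hf₀ : ∀ n q, 0 ≤ f n q) (hfF : ∀ n q i, f n q ≤ F q (x n i)) :
    Tendsto (fun n => ⨆ q, f n q) atTop (𝓝 0) := by
  rw [Metric.tendsto_nhds]
  intro ε hε
  obtain ⟨δ, hδ, hFδ⟩ := exists_pos_forall_dist_lt_imp_lt hF hdiag (half_pos hε)
  filter_upwards [eventually_forall_exists_dist_lt hx hδ] with n hn
  have hsup : ⨆ q, f n q ≤ ε / 2 := Real.iSup_le (fun q => by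
    obtain ⟨i, hi⟩ := hn q
    exact (hfF n q i).trans (hFδ q _ hi).le) (half_pos hε).le
  rw [Real.dist_eq, sub_zero, abs_of_nonneg (Real.iSup_nonneg (hf₀ n))]
  exact hsup.trans_lt (half_lt_self hε)

end Dense

theorem stmt_8_general {d : ℕ} {Ω : Type*} [MeasurableSpace Ω]
    (μ : Measure Ω) [IsProbabilityMeasure μ]
    (D : Set (EuclideanSpace ℝ (Fin d))) (hDc : IsCompact D)
    (Y : D → Ω → ℝ) (hYmeas : ∀ x, Measurable (Y x)) (hYL2 : ∀ x, MemLp (Y x) 2 μ)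
    (k : D → D → ℝ) (hkcont : Continuous fun q : D × D => k q.1 q.2)
    (hk : ∀ x x', ∫ ω, Y x ω * Y x' ω ∂μ = k x x')
    -- dense triangular array of observation points
    (x : (n : ℕ) → Fin (n + 1) → D)
    (hdense : ∀ q : D, Tendsto
      (fun n => ⨅ i : Fin (n + 1),
        dist (x n i : EuclideanSpace ℝ (Fin d)) (q : EuclideanSpace ℝ (Fin d)))
      atTop (nhds 0))
    -- the sub-designs, covering all observation points
    (p : ℕ → ℕ)
    (S : (n : ℕ) → Fin (p n) → Finset (Fin (n + 1)))
    (hcover : ∀ n (i : Fin (n + 1)), ∃ j, i ∈ S n j)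
    -- the Kriging sub-models: conditional expectations given the sub-design observations
    (M : (n : ℕ) → Fin (p n) → D → Ω → ℝ)
    (hM : ∀ n j q, M n j q =ᵐ[μ]
      μ[Y q | MeasurableSpace.comap (fun ω (i : S n j) => Y (x n i) ω) inferInstance])
    -- the aggregated predictor: optimal linear combination of the sub-models
    (MA : (n : ℕ) → D → Ω → ℝ)
    (hMA_opt : ∀ n q (c : Fin (p n) → ℝ),
      ∫ ω, (Y q ω - MA n q ω) ^ 2 ∂μ ≤ ∫ ω, (Y q ω - ∑ j, c j * M n j q ω) ^ 2 ∂μ) :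
    Tendsto (fun n => ⨆ q : D, ∫ ω, (Y q ω - MA n q ω) ^ 2 ∂μ) atTop (nhds 0) := by
  have := isCompact_iff_compactSpace.mp hDc
  have hvariogram : Continuous fun r : D × D => k r.1 r.1 - 2 * k r.1 r.2 + k r.2 r.2 :=
    ((hkcont.comp (continuous_fst.prodMk continuous_fst)).sub (continuous_const.mul hkcont)).add
      (hkcont.comp (continuous_snd.prodMk continuous_snd))
  refine tendsto_iSup_of_le_of_tendsto_iInf_dist hdense
    (F := fun q r => k q q - 2 * k q r + k r r) hvariogram (fun q => by ring)
    (fun n q => integral_nonneg fun ω => sq_nonneg _) fun n q i => ?_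
  obtain ⟨j, hij⟩ := hcover n i
  calc ∫ ω, (Y q ω - MA n q ω) ^ 2 ∂μ ≤ ∫ ω, (Y q ω - M n j q ω) ^ 2 ∂μ := by
        simpa [Pi.single_apply] using hMA_opt n q (Pi.single j 1)
    _ = ∫ ω, (Y q ω - μ[Y q | MeasurableSpace.comap
          (fun ω (i : S n j) => Y (x n i) ω) inferInstance] ω) ^ 2 ∂μ :=
        integral_congr_ae ((hM n j q).mono fun ω hω => by simp only [hω])
    _ ≤ ∫ ω, (Y q ω - Y (x n i) ω) ^ 2 ∂μ :=
        integral_sq_sub_condExp_comap_le (fun i => hYmeas _) (hYL2 q) (⟨i, hij⟩ : S n j) (hYL2 _)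
    _ = k q q - 2 * k q (x n i) + k (x n i) (x n i) := by
        rw [integral_sub_sq (hYL2 q) (hYL2 _), hk, hk, hk]

/-- Consistency of nested Kriging: for a centered Gaussian process `Y` on a compact
`D ⊆ ℝ^d` with continuous covariance `k`, a dense triangular array of observation points,
Kriging (conditional expectation) sub-models based on subvectors covering all observation
points, and the optimal linear aggregation `M_{A_n}`, one has
`sup_{x ∈ D} E[(Y(x) - M_{A_n}(x))²] → 0`. -/
theorem stmt_8 {d : ℕ} {Ω : Type*} [MeasurableSpace Ω]
    (μ : Measure Ω) [IsProbabilityMeasure μ]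
    (D : Set (EuclideanSpace ℝ (Fin d))) (hDc : IsCompact D) (hDne : D.Nonempty)
    (Y : D → Ω → ℝ) (hYmeas : ∀ x, Measurable (Y x)) (hYL2 : ∀ x, MemLp (Y x) 2 μ)
    (hYc : ∀ x, ∫ ω, Y x ω ∂μ = 0)
    (k : D → D → ℝ) (hkcont : Continuous fun q : D × D => k q.1 q.2)
    (hk : ∀ x x', ∫ ω, Y x ω * Y x' ω ∂μ = k x x')
    -- Y is a Gaussian process with covariance k
    (hGauss : ∀ (m : ℕ) (pts : Fin m → D) (c : Fin m → ℝ),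
      Measure.map (fun ω => ∑ i, c i * Y (pts i) ω) μ =
        gaussianReal 0 (∑ i, ∑ j, c i * c j * k (pts i) (pts j)).toNNReal)
    -- dense triangular array of observation points
    (x : (n : ℕ) → Fin (n + 1) → D)
    (hdense : ∀ q : D, Tendsto
      (fun n => ⨅ i : Fin (n + 1),
        dist (x n i : EuclideanSpace ℝ (Fin d)) (q : EuclideanSpace ℝ (Fin d)))
      atTop (nhds 0))
    -- the sub-designs, covering all observation points
    (p : ℕ → ℕ) (hp : ∀ n, 0 < p n)
    (S : (n : ℕ) → Fin (p n) → Finset (Fin (n + 1)))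
    (hcover : ∀ n (i : Fin (n + 1)), ∃ j, i ∈ S n j)
    -- the Kriging sub-models: conditional expectations given the sub-design observations
    (M : (n : ℕ) → Fin (p n) → D → Ω → ℝ)
    (hM : ∀ n j q, M n j q =ᵐ[μ]
      μ[Y q | MeasurableSpace.comap (fun ω (i : S n j) => Y (x n i) ω) inferInstance])
    -- the aggregated predictor: optimal linear combination of the sub-models
    (MA : (n : ℕ) → D → Ω → ℝ)
    (hMA_lin : ∀ n q, ∃ c : Fin (p n) → ℝ, ∀ ω, MA n q ω = ∑ j, c j * M n j q ω)
    (hMA_opt : ∀ n q (c : Fin (p n) → ℝ),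
      ∫ ω, (Y q ω - MA n q ω) ^ 2 ∂μ ≤ ∫ ω, (Y q ω - ∑ j, c j * M n j q ω) ^ 2 ∂μ) :
    Tendsto (fun n => ⨆ q : D, ∫ ω, (Y q ω - MA n q ω) ^ 2 ∂μ) atTop (nhds 0) :=
  stmt_8_general μ D hDc Y hYmeas hYL2 k hkcont hk x hdense p S hcover M hM MA hMA_opt
end

section
/- Assume M(x) = Λ(x) Y(X) with Λ(x) k(X,X) Λ(x)^T invertible. Then M_A(x) - M_full(x) = -k(x,X) Δ(x) Y(X) and v_A(x) - v_full(x) = k(x,X) Δ(x) k(X,x), where Δ(x) = k(X,X)^{-1} - Λ(x)^T (Λ(x) k(X,X) Λ(x)^T)^{-1} Λ(x). Consequently there exist constants λ, μ ≥ 0 (depending on Δ(x)) such that |M_A(x) - M_full(x)| ≤ λ ||k(X,x)|| ||Y(X)|| and |v_A(x) - v_full(x)| ≤ μ ||k(X,x)||^2. -/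
/-!
Both predictors have the form `k(x,X)ᵀ P Y(X)` with `P` symmetric and `P K P = P`: `P = K⁻¹` for
the full model and `P = Λᵀ (Λ K Λᵀ)⁻¹ Λ` for the aggregated one. For such `P`, expanding the square
gives the mean square error `k(x,x) - k(x,X)ᵀ P k(X,x)`, so both differences are linear in
`Δ = K⁻¹ - Λᵀ (Λ K Λᵀ)⁻¹ Λ`. The bounds hold because the bilinear form `(u, v) ↦ uᵀ Δ v` on a
finite-dimensional space is bounded for any norm.
-/

open MeasureTheory Matrix

section AggregationWeights

variable {m n R : Type*} [Fintype m] [Fintype n] [DecidableEq m] [CommRing R]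

noncomputable def aggregationWeights (K : Matrix n n R) (L : Matrix m n R) : Matrix n n R :=
  Lᵀ * (L * K * Lᵀ)⁻¹ * L

theorem isSymm_aggregationWeights {K : Matrix n n R} (hK : K.IsSymm) (L : Matrix m n R) :
    (aggregationWeights K L).IsSymm := by
  simp only [IsSymm, aggregationWeights, transpose_mul, transpose_transpose,
    transpose_nonsing_inv, hK.eq, Matrix.mul_assoc]

theorem aggregationWeights_mul_mul_self {K : Matrix n n R} {L : Matrix m n R}
    (h : IsUnit (L * K * Lᵀ).det) :
    aggregationWeights K L * K * aggregationWeights K L = aggregationWeights K L := by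
  calc aggregationWeights K L * K * aggregationWeights K L
      = Lᵀ * ((L * K * Lᵀ)⁻¹ * (L * K * Lᵀ)) * (L * K * Lᵀ)⁻¹ * L := by
        simp only [aggregationWeights, Matrix.mul_assoc]
    _ = aggregationWeights K L := by
        rw [nonsing_inv_mul _ h, Matrix.mul_one]; rfl

end AggregationWeights

section SecondMoments

variable {Ω : Type*} [MeasurableSpace Ω] {μ : Measure Ω} {n : Type*} [Fintype n]
  {Y : Ω → ℝ} {X : Ω → n → ℝ}

theorem MeasureTheory.MemLp.integrable_mul_two {f g : Ω → ℝ} (hf : MemLp f 2 μ)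
    (hg : MemLp g 2 μ) :
    Integrable (fun ω => f ω * g ω) μ :=
  hf.integrable_mul hg

theorem memLp_dotProduct (hX : ∀ i, MemLp (fun ω => X ω i) 2 μ) (a : n → ℝ) :
    MemLp (fun ω => a ⬝ᵥ X ω) 2 μ :=
  memLp_finsetSum _ fun i _ => (hX i).const_mul (a i)

theorem integral_mul_dotProduct (hY : MemLp Y 2 μ) (hX : ∀ i, MemLp (fun ω => X ω i) 2 μ)
    (a : n → ℝ) :
    ∫ ω, Y ω * (a ⬝ᵥ X ω) ∂μ = a ⬝ᵥ fun i => ∫ ω, Y ω * X ω i ∂μ := by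
  simp only [dotProduct, Finset.mul_sum, mul_left_comm (Y _)]
  rw [integral_finsetSum _ fun i _ => (hY.integrable_mul_two (hX i)).const_mul (a i)]
  simp only [integral_const_mul]

theorem integral_sub_dotProduct_sq (hY : MemLp Y 2 μ) (hX : ∀ i, MemLp (fun ω => X ω i) 2 μ)
    (a : n → ℝ) :
    ∫ ω, (Y ω - a ⬝ᵥ X ω) ^ 2 ∂μ =
      ∫ ω, Y ω ^ 2 ∂μ - 2 * (a ⬝ᵥ fun i => ∫ ω, Y ω * X ω i ∂μ) +
        a ⬝ᵥ (of (fun i j => ∫ ω, X ω i * X ω j ∂μ) *ᵥ a) := by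
  have hXa := memLp_dotProduct hX a
  have hYXa := (hY.integrable_mul_two hXa).const_mul 2
  calc ∫ ω, (Y ω - a ⬝ᵥ X ω) ^ 2 ∂μ
      = ∫ ω, Y ω ^ 2 - 2 * (Y ω * (a ⬝ᵥ X ω)) + (a ⬝ᵥ X ω) * (a ⬝ᵥ X ω) ∂μ := by
        congr 1; ext ω; ring
    _ = ∫ ω, Y ω ^ 2 ∂μ - 2 * ∫ ω, Y ω * (a ⬝ᵥ X ω) ∂μ +
          ∫ ω, (a ⬝ᵥ X ω) * (a ⬝ᵥ X ω) ∂μ := by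
        rw [integral_add ?_ (hXa.integrable_mul_two hXa), integral_sub hY.integrable_sq hYXa,
          integral_const_mul]
        exact hY.integrable_sq.sub hYXa
    _ = _ := by
        rw [integral_mul_dotProduct hY hX, integral_mul_dotProduct hXa hX]
        congr 2; ext i
        simp only [mul_comm _ (X _ i)]
        rw [integral_mul_dotProduct (hX i) hX, dotProduct_comm]
        rfl

theorem integral_sub_dotProduct_mulVec_sq (hY : MemLp Y 2 μ)
    (hX : ∀ i, MemLp (fun ω => X ω i) 2 μ) {K : Matrix n n ℝ}
    (hK : ∀ i j, K i j = ∫ ω, X ω i * X ω j ∂μ) {k : n → ℝ}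
    (hk : ∀ i, k i = ∫ ω, Y ω * X ω i ∂μ) {P : Matrix n n ℝ} (hP : P.IsSymm)
    (hPKP : P * K * P = P) :
    ∫ ω, (Y ω - k ⬝ᵥ (P *ᵥ X ω)) ^ 2 ∂μ = ∫ ω, Y ω ^ 2 ∂μ - k ⬝ᵥ (P *ᵥ k) := by
  have hPk : k ᵥ* P = P *ᵥ k := by rw [← vecMul_transpose, hP.eq]
  have hquad : (P *ᵥ k) ⬝ᵥ (K *ᵥ (P *ᵥ k)) = k ⬝ᵥ (P *ᵥ k) :=
    calc (P *ᵥ k) ⬝ᵥ (K *ᵥ (P *ᵥ k)) = k ⬝ᵥ ((P * K * P) *ᵥ k) := by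
          rw [← mulVec_mulVec, ← mulVec_mulVec, dotProduct_mulVec k P, hPk]
      _ = k ⬝ᵥ (P *ᵥ k) := by rw [hPKP]
  have hK' : of (fun i j => ∫ ω, X ω i * X ω j ∂μ) = K := Matrix.ext fun i j => (hK i j).symm
  have hk' : (fun i => ∫ ω, Y ω * X ω i ∂μ) = k := funext fun i => (hk i).symm
  simp only [dotProduct_mulVec k P, hPk]
  rw [integral_sub_dotProduct_sq hY hX, hK', hk', hquad, dotProduct_comm]
  ring

end SecondMoments

theorem Matrix.exists_abs_dotProduct_mulVec_le {m n : Type*} [Fintype m] [Fintype n]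
    (A : Matrix m n ℝ) : ∃ C ≥ 0, ∀ u v, |u ⬝ᵥ (A *ᵥ v)| ≤ C * ‖u‖ * ‖v‖ := by
  let B : (m → ℝ) →L[ℝ] (n → ℝ) →L[ℝ] ℝ :=
    LinearMap.toContinuousLinearMap
      (LinearMap.toContinuousLinearMap.toLinearMap ∘ₗ (dotProductBilin ℝ ℝ).compl₂ A.mulVecLin)
  refine ⟨‖B‖, by positivity, fun u v => ?_⟩
  simpa [B, dotProductBilin] using B.le_opNorm₂ u v

theorem stmt_12_general {Ω : Type*} [MeasurableSpace Ω] (μ : Measure Ω)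
    {n q : ℕ} (Yx : Ω → ℝ) (YX : Ω → Fin n → ℝ)
    (hYL2 : MemLp Yx 2 μ) (hXL2 : ∀ i, MemLp (fun ω => YX ω i) 2 μ)
    (K : Matrix (Fin n) (Fin n) ℝ) (hK : ∀ i j, K i j = ∫ ω, YX ω i * YX ω j ∂μ)
    (hKinv : IsUnit K.det)
    (kx : Fin n → ℝ) (hkx : ∀ i, kx i = ∫ ω, Yx ω * YX ω i ∂μ)
    (L : Matrix (Fin q) (Fin n) ℝ) (hinv : IsUnit (L * K * Lᵀ).det)
    (MA Mfull : Ω → ℝ)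
    (hMA : ∀ ω, MA ω = (L *ᵥ kx) ⬝ᵥ ((L * K * Lᵀ)⁻¹ *ᵥ (L *ᵥ YX ω)))
    (hMfull : ∀ ω, Mfull ω = kx ⬝ᵥ (K⁻¹ *ᵥ YX ω))
    (Δ : Matrix (Fin n) (Fin n) ℝ)
    (hΔ : Δ = K⁻¹ - Lᵀ * (L * K * Lᵀ)⁻¹ * L)
    (vA vfull : ℝ)
    (hvA : vA = ∫ ω, (Yx ω - MA ω) ^ 2 ∂μ)
    (hvfull : vfull = ∫ ω, (Yx ω - Mfull ω) ^ 2 ∂μ) :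
    (∀ ω, MA ω - Mfull ω = -(kx ⬝ᵥ (Δ *ᵥ YX ω))) ∧
    vA - vfull = kx ⬝ᵥ (Δ *ᵥ kx) ∧
    ∃ lam ≥ (0 : ℝ), ∃ mu ≥ (0 : ℝ),
      (∀ ω, |MA ω - Mfull ω| ≤ lam * ‖kx‖ * ‖YX ω‖) ∧
      |vA - vfull| ≤ mu * ‖kx‖ ^ 2 := by
  have hKsymm : K.IsSymm := Matrix.ext fun i j => by simp only [transpose_apply, hK, mul_comm]
  have hKinvK : K⁻¹ * K * K⁻¹ = K⁻¹ := by rw [nonsing_inv_mul _ hKinv, Matrix.one_mul]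
  set P := aggregationWeights K L
  have hΔP : Δ = K⁻¹ - P := hΔ
  have hMA' : ∀ ω, MA ω = kx ⬝ᵥ (P *ᵥ YX ω) := fun ω => by
    rw [hMA, ← vecMul_transpose, ← dotProduct_mulVec, mulVec_mulVec, mulVec_mulVec]; rfl
  have hMdiff : ∀ ω, MA ω - Mfull ω = -(kx ⬝ᵥ (Δ *ᵥ YX ω)) := fun ω => by
    rw [hMA', hMfull, hΔP, sub_mulVec, dotProduct_sub]; ring
  have hvA' : vA = ∫ ω, Yx ω ^ 2 ∂μ - kx ⬝ᵥ (P *ᵥ kx) := by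
    simp only [hvA, hMA']
    exact integral_sub_dotProduct_mulVec_sq hYL2 hXL2 hK hkx
      (isSymm_aggregationWeights hKsymm L) (aggregationWeights_mul_mul_self hinv)
  have hvfull' : vfull = ∫ ω, Yx ω ^ 2 ∂μ - kx ⬝ᵥ (K⁻¹ *ᵥ kx) := by
    simp only [hvfull, hMfull]
    exact integral_sub_dotProduct_mulVec_sq hYL2 hXL2 hK hkx hKsymm.inv hKinvK
  have hvdiff : vA - vfull = kx ⬝ᵥ (Δ *ᵥ kx) := by
    rw [hvA', hvfull', hΔP, sub_mulVec, dotProduct_sub]; ring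
  obtain ⟨C, hC, hbound⟩ := exists_abs_dotProduct_mulVec_le Δ
  refine ⟨hMdiff, hvdiff, C, hC, C, hC, fun ω => ?_, ?_⟩
  · rw [hMdiff, abs_neg]
    exact hbound _ _
  · rw [hvdiff, sq, ← mul_assoc]
    exact hbound _ _

/-- For linear sub-models `M(x) = Λ Y(X)` with `Λ K Λᵀ` invertible, the differences between
the aggregated and full models are `M_A - M_full = -k(x,X)ᵀ Δ Y(X)` and
`v_A - v_full = k(x,X)ᵀ Δ k(X,x)` with `Δ = K⁻¹ - Λᵀ (Λ K Λᵀ)⁻¹ Λ`; consequently there are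
constants `λ, μ ≥ 0` with `|M_A - M_full| ≤ λ ‖k(X,x)‖ ‖Y(X)‖` and
`|v_A - v_full| ≤ μ ‖k(X,x)‖²`. -/
theorem stmt_12 {Ω : Type*} [MeasurableSpace Ω] (μ : Measure Ω) [IsProbabilityMeasure μ]
    {n q : ℕ} (Yx : Ω → ℝ) (YX : Ω → Fin n → ℝ)
    (hYc : ∫ ω, Yx ω ∂μ = 0) (hXc : ∀ i, ∫ ω, YX ω i ∂μ = 0)
    (hYL2 : MemLp Yx 2 μ) (hXL2 : ∀ i, MemLp (fun ω => YX ω i) 2 μ)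
    (K : Matrix (Fin n) (Fin n) ℝ) (hK : ∀ i j, K i j = ∫ ω, YX ω i * YX ω j ∂μ)
    (hKinv : IsUnit K.det)
    (kx : Fin n → ℝ) (hkx : ∀ i, kx i = ∫ ω, Yx ω * YX ω i ∂μ)
    (kxx : ℝ) (hkxx : kxx = ∫ ω, Yx ω ^ 2 ∂μ)
    (L : Matrix (Fin q) (Fin n) ℝ) (hinv : IsUnit (L * K * Lᵀ).det)
    (MA Mfull : Ω → ℝ)
    (hMA : ∀ ω, MA ω = (L *ᵥ kx) ⬝ᵥ ((L * K * Lᵀ)⁻¹ *ᵥ (L *ᵥ YX ω)))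
    (hMfull : ∀ ω, Mfull ω = kx ⬝ᵥ (K⁻¹ *ᵥ YX ω))
    (Δ : Matrix (Fin n) (Fin n) ℝ)
    (hΔ : Δ = K⁻¹ - Lᵀ * (L * K * Lᵀ)⁻¹ * L)
    (vA vfull : ℝ)
    (hvA : vA = ∫ ω, (Yx ω - MA ω) ^ 2 ∂μ)
    (hvfull : vfull = ∫ ω, (Yx ω - Mfull ω) ^ 2 ∂μ) :
    (∀ ω, MA ω - Mfull ω = -(kx ⬝ᵥ (Δ *ᵥ YX ω))) ∧
    vA - vfull = kx ⬝ᵥ (Δ *ᵥ kx) ∧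
    ∃ lam ≥ (0 : ℝ), ∃ mu ≥ (0 : ℝ),
      (∀ ω, |MA ω - Mfull ω| ≤ lam * ‖kx‖ * ‖YX ω‖) ∧
      |vA - vfull| ≤ mu * ‖kx‖ ^ 2 :=
  stmt_12_general μ Yx YX hYL2 hXL2 K hK hKinv kx hkx L hinv MA Mfull hMA hMfull Δ hΔ vA vfull hvA
    hvfull
end
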